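/- arXiv:2411.00463 — 2 statements merged into one kernel-verified Lean document; each statement's English description precedes it below -/
import Mathlib

section
/- Let H₁ and H₂ be real Hilbert spaces, R : H₁ → H₂ a bounded linear operator with adjoint R*, and y ∈ H₂. If y lies in the closure of the range of R, then the residual of the Tikhonov regularized solutions converges to zero: ‖R ψ_α − y‖ → 0 as α → 0⁺, where ψ_α := (αI + R*R)⁻¹ R* y. -/
open Topology Filter RealInnerProductSpace

/-- The Tikhonov regularized solution `ψ_α = (α I + R* R)⁻¹ R* y`. -/
noncomputable def tikhonov
    {H₁ H₂ : Type*} [NormedAddCommGroup H₁] [InnerProductSpace ℝ H₁] [CompleteSpace H₁]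
    [NormedAddCommGroup H₂] [InnerProductSpace ℝ H₂] [CompleteSpace H₂]
    (R : H₁ →L[ℝ] H₂) (α : ℝ) (y : H₂) : H₁ :=
  Ring.inverse (α • (1 : H₁ →L[ℝ] H₁) + (ContinuousLinearMap.adjoint R).comp R)
    ((ContinuousLinearMap.adjoint R) y)

section Aux

variable {H₁ H₂ : Type*} [NormedAddCommGroup H₁] [InnerProductSpace ℝ H₁] [CompleteSpace H₁]
    [NormedAddCommGroup H₂] [InnerProductSpace ℝ H₂] [CompleteSpace H₂]

/-- The operator `α I + R* R`. -/
noncomputable def tikOp (R : H₁ →L[ℝ] H₂) (α : ℝ) : H₁ →L[ℝ] H₁ :=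
  α • (1 : H₁ →L[ℝ] H₁) + (ContinuousLinearMap.adjoint R).comp R

variable (R : H₁ →L[ℝ] H₂)

lemma tikhonov_isUnit {α : ℝ} (hα : 0 < α) : IsUnit (tikOp R α) := by
  set Aα := tikOp R α with hA
  have key : ∀ u w : H₁, ⟪Aα u, w⟫ = ((innerSL ℝ).comp Aα) u w := fun u w => rfl
  have coercive : IsCoercive ((innerSL ℝ).comp Aα) := by
    refine ⟨α, hα, fun u => ?_⟩
    have huu : ((innerSL ℝ).comp Aα) u u = α * ⟪u, u⟫ + ⟪R u, R u⟫ := by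
      simp [hA, tikOp, inner_add_left, real_inner_smul_left,
        ContinuousLinearMap.adjoint_inner_left]
    rw [huu, real_inner_self_eq_norm_mul_norm, real_inner_self_eq_norm_mul_norm]
    nlinarith [mul_self_nonneg ‖R u‖]
  set E := coercive.continuousLinearEquivOfBilin
  have hAE : Aα = (E : H₁ →L[ℝ] H₁) := by
    ext u
    refine ext_inner_left ℝ (fun w => ?_)
    rw [real_inner_comm, key u w, real_inner_comm]
    exact (coercive.continuousLinearEquivOfBilin_apply u w).symm
  rw [hAE]
  exact ⟨⟨(E : H₁ →L[ℝ] H₁), (E.symm : H₁ →L[ℝ] H₁),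
    by ext x; simp, by ext x; simp⟩, rfl⟩

lemma tikhonov_spec {α : ℝ} (hα : 0 < α) (y : H₂) :
    (tikOp R α) (tikhonov R α y) = (ContinuousLinearMap.adjoint R) y := by
  have h := Ring.mul_inverse_cancel _ (tikhonov_isUnit R hα)
  calc (tikOp R α) (tikhonov R α y)
      = ((tikOp R α) * Ring.inverse (tikOp R α)) ((ContinuousLinearMap.adjoint R) y) := rfl
    _ = (ContinuousLinearMap.adjoint R) y := by rw [h]; rfl

/-- Expand the defining equation: `α • x + R* (R x) = R* u` for `x = tikhonov R α u`. -/
lemma tikhonov_eq {α : ℝ} (hα : 0 < α) (u : H₂) :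
    α • tikhonov R α u + (ContinuousLinearMap.adjoint R) (R (tikhonov R α u))
      = (ContinuousLinearMap.adjoint R) u := by
  have := tikhonov_spec R hα u
  simpa [tikOp, ContinuousLinearMap.add_apply] using this

lemma tikhonov_residual_le {α : ℝ} (hα : 0 < α) (u : H₂) :
    ‖R (tikhonov R α u) - u‖ ≤ ‖u‖ := by
  set x := tikhonov R α u with hx
  have heq := tikhonov_eq R hα u
  have hinner : ⟪R x, u⟫ = α * ‖x‖ ^ 2 + ‖R x‖ ^ 2 := by
    have h1 : ⟪R x, u⟫ = ⟪x, (ContinuousLinearMap.adjoint R) u⟫ := by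
      rw [ContinuousLinearMap.adjoint_inner_right]
    rw [h1, ← heq, inner_add_right, real_inner_smul_right,
      real_inner_self_eq_norm_sq, ContinuousLinearMap.adjoint_inner_right,
      real_inner_self_eq_norm_sq]
  have hexp : ‖R x - u‖ ^ 2 = ‖R x‖ ^ 2 - 2 * ⟪R x, u⟫ + ‖u‖ ^ 2 := by
    rw [← real_inner_self_eq_norm_sq, inner_sub_sub_self, real_inner_self_eq_norm_sq,
      real_inner_self_eq_norm_sq, real_inner_comm u (R x)]
    ring
  have h2 : ‖R x - u‖ ^ 2 ≤ ‖u‖ ^ 2 := by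
    rw [hexp, hinner]; nlinarith [sq_nonneg ‖x‖, sq_nonneg ‖R x‖]
  nlinarith [norm_nonneg (R x - u), norm_nonneg u]

lemma tikhonov_residual_range_le {α : ℝ} (hα : 0 < α) (w : H₁) :
    ‖R (tikhonov R α (R w)) - R w‖ ≤ Real.sqrt α * ‖w‖ := by
  set x := tikhonov R α (R w) with hx
  have heq := tikhonov_eq R hα (R w)
  have key : α • x = (ContinuousLinearMap.adjoint R) (R (w - x)) := by
    rw [map_sub, map_sub, eq_sub_iff_add_eq]
    exact heq
  have h1 : α * ⟪x, w - x⟫ = ‖R (w - x)‖ ^ 2 := by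
    have h : ⟪α • x, w - x⟫ = ⟪R (w - x), R (w - x)⟫ := by
      rw [key, ContinuousLinearMap.adjoint_inner_left]
    rwa [real_inner_smul_left, real_inner_self_eq_norm_sq] at h
  have h0' : 0 ≤ ⟪x, w - x⟫ := by
    have h0 : 0 ≤ α * ⟪x, w - x⟫ := h1 ▸ sq_nonneg _
    exact nonneg_of_mul_nonneg_right h0 hα
  have hsub : ⟪x, w - x⟫ = ⟪x, w⟫ - ‖x‖ ^ 2 := by
    rw [inner_sub_right, real_inner_self_eq_norm_sq]
  have hxw : ‖x‖ ^ 2 ≤ ⟪x, w⟫ := by rw [hsub] at h0'; linarith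
  have hxnorm : ‖x‖ ≤ ‖w‖ := by
    nlinarith [real_inner_le_norm x w, norm_nonneg x, norm_nonneg w]
  have h2 : ‖R x - R w‖ ^ 2 ≤ α * ‖w‖ ^ 2 := by
    have hrw : R x - R w = -(R (w - x)) := by rw [map_sub]; abel
    rw [hrw, norm_neg, ← h1]
    have hle : ⟪x, w - x⟫ ≤ ‖w‖ ^ 2 := by
      have := real_inner_le_norm x w
      nlinarith [sq_nonneg ‖x‖, norm_nonneg x, norm_nonneg w]
    nlinarith
  have hs : (Real.sqrt α * ‖w‖) ^ 2 = α * ‖w‖ ^ 2 := by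
    rw [mul_pow, Real.sq_sqrt hα.le]
  have hnn : 0 ≤ Real.sqrt α * ‖w‖ := mul_nonneg (Real.sqrt_nonneg _) (norm_nonneg _)
  nlinarith [norm_nonneg (R x - R w)]

end Aux

/-- If `y` lies in the closure of the range of `R`, then the residual of the Tikhonov
regularized solutions converges to zero: `‖R ψ_α - y‖ → 0` as `α → 0⁺`. -/
theorem tikhonov_residual_tendsto_zero
    {H₁ H₂ : Type*} [NormedAddCommGroup H₁] [InnerProductSpace ℝ H₁] [CompleteSpace H₁]
    [NormedAddCommGroup H₂] [InnerProductSpace ℝ H₂] [CompleteSpace H₂]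
    (R : H₁ →L[ℝ] H₂) (y : H₂) (hy : y ∈ closure (Set.range R)) :
    Tendsto (fun α : ℝ => ‖R (tikhonov R α y) - y‖) (𝓝[>] 0) (𝓝 0) := by
  rw [Metric.tendsto_nhdsWithin_nhds]
  intro ε hε
  obtain ⟨z, hz, hzw⟩ := Metric.mem_closure_iff.mp hy (ε / 3) (by linarith)
  obtain ⟨w, rfl⟩ := hz
  refine ⟨(ε / 3 / (‖w‖ + 1)) ^ 2, by positivity, fun α hα hdist => ?_⟩
  have hα0 : (0 : ℝ) < α := hα
  have hαlt : α < (ε / 3 / (‖w‖ + 1)) ^ 2 := by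
    rwa [Real.dist_eq, sub_zero, abs_of_pos hα0] at hdist
  have hadd : tikhonov R α y = tikhonov R α (y - R w) + tikhonov R α (R w) := by
    unfold tikhonov
    rw [← map_add, ← map_add, sub_add_cancel]
  have hsplit : R (tikhonov R α y) - y
      = (R (tikhonov R α (y - R w)) - (y - R w)) + (R (tikhonov R α (R w)) - R w) := by
    rw [hadd, map_add]; abel
  have h1 : ‖R (tikhonov R α (y - R w)) - (y - R w)‖ ≤ ‖y - R w‖ :=
    tikhonov_residual_le R hα0 _
  have h2 : ‖R (tikhonov R α (R w)) - R w‖ ≤ Real.sqrt α * ‖w‖ :=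
    tikhonov_residual_range_le R hα0 w
  have hyw : ‖y - R w‖ < ε / 3 := by
    rw [← dist_eq_norm]; exact hzw
  have hsqrt : Real.sqrt α * ‖w‖ < ε / 3 := by
    have hsq : Real.sqrt α < ε / 3 / (‖w‖ + 1) := by
      have h := Real.sqrt_lt_sqrt hα0.le hαlt
      rwa [Real.sqrt_sq (by positivity)] at h
    calc Real.sqrt α * ‖w‖ ≤ Real.sqrt α * (‖w‖ + 1) := by
          have := Real.sqrt_nonneg α; nlinarith
      _ < ε / 3 / (‖w‖ + 1) * (‖w‖ + 1) := by
          apply mul_lt_mul_of_pos_right hsq; positivity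
      _ = ε / 3 := by
          field_simp
  have hfin : ‖R (tikhonov R α y) - y‖ < ε := by
    calc ‖R (tikhonov R α y) - y‖
        ≤ ‖R (tikhonov R α (y - R w)) - (y - R w)‖ + ‖R (tikhonov R α (R w)) - R w‖ := by
          rw [hsplit]; exact norm_add_le _ _
      _ < ε / 3 + ε / 3 := by
          have := h1.trans_lt hyw; have := h2.trans_lt hsqrt; linarith
      _ < ε := by linarith
  simpa [Real.dist_eq, abs_of_nonneg (norm_nonneg _)] using hfin
end

section
/- Let H₁ and H₂ be real Hilbert spaces, R : H₁ → H₂ an injective bounded linear operator with adjoint R*, and y ∈ H₂. If y belongs to the range of R, so that y = R ψ̃ for a unique ψ̃ ∈ H₁, then the Tikhonov regularized solutions ψ_α := (αI + R*R)⁻¹ R* y converge in the norm of H₁ to ψ̃ as α → 0⁺. -/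
open Topology Filter

section TikhonovAux

open ContinuousLinearMap InnerProductSpace

variable {H₁ H₂ : Type*} [NormedAddCommGroup H₁] [InnerProductSpace ℝ H₁] [CompleteSpace H₁]
    [NormedAddCommGroup H₂] [InnerProductSpace ℝ H₂] [CompleteSpace H₂]

lemma tik_inner (R : H₁ →L[ℝ] H₂) (x : H₁) :
    ⟪((ContinuousLinearMap.adjoint R).comp R) x, x⟫_ℝ = ‖R x‖ ^ 2 := by
  rw [ContinuousLinearMap.comp_apply, ContinuousLinearMap.adjoint_inner_left,
    real_inner_self_eq_norm_sq]

lemma tik_coercive (R : H₁ →L[ℝ] H₂) {α : ℝ} (hα : 0 < α) (x : H₁) :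
    α * ‖x‖ * ‖x‖ ≤ ⟪(α • (1 : H₁ →L[ℝ] H₁) + (ContinuousLinearMap.adjoint R).comp R) x, x⟫_ℝ := by
  have h1 : ⟪(α • (1 : H₁ →L[ℝ] H₁) + (ContinuousLinearMap.adjoint R).comp R) x, x⟫_ℝ
      = α * (‖x‖ * ‖x‖) + ‖R x‖ ^ 2 := by
    rw [ContinuousLinearMap.add_apply, inner_add_left, ContinuousLinearMap.smul_apply,
      ContinuousLinearMap.one_apply, real_inner_smul_left, tik_inner,
      real_inner_self_eq_norm_mul_norm]
  nlinarith [sq_nonneg ‖R x‖]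

lemma tik_isCoercive (R : H₁ →L[ℝ] H₂) {α : ℝ} (hα : 0 < α) :
    IsCoercive ((innerSL ℝ).comp
      (α • (1 : H₁ →L[ℝ] H₁) + (ContinuousLinearMap.adjoint R).comp R)) :=
  ⟨α, hα, fun x => tik_coercive R hα x⟩

lemma tik_exists_inverse (R : H₁ →L[ℝ] H₂) {α : ℝ} (hα : 0 < α) :
    ∃ S : H₁ →L[ℝ] H₁,
      Ring.inverse (α • (1 : H₁ →L[ℝ] H₁) + (ContinuousLinearMap.adjoint R).comp R) = S ∧
      (∀ x, S ((α • (1 : H₁ →L[ℝ] H₁) + (ContinuousLinearMap.adjoint R).comp R) x) = x) ∧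
      (∀ x, (α • (1 : H₁ →L[ℝ] H₁) + (ContinuousLinearMap.adjoint R).comp R) (S x) = x) ∧
      (∀ x, ‖S x‖ ≤ α⁻¹ * ‖x‖) := by
  set A : H₁ →L[ℝ] H₁ := α • (1 : H₁ →L[ℝ] H₁) + (ContinuousLinearMap.adjoint R).comp R with hA
  have hc := tik_isCoercive R hα
  set e := hc.continuousLinearEquivOfBilin with he
  have hAe : ∀ v, A v = e v := by
    intro v
    refine ext_inner_right ℝ fun w => ?_
    rw [hc.continuousLinearEquivOfBilin_apply]
    rfl
  have hmul1 : A * e.symm.toContinuousLinearMap = 1 := by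
    ext x
    simp only [ContinuousLinearMap.mul_apply, ContinuousLinearMap.one_apply,
      ContinuousLinearEquiv.coe_coe, hAe]
    exact e.apply_symm_apply x
  have hmul2 : e.symm.toContinuousLinearMap * A = 1 := by
    ext x
    simp only [ContinuousLinearMap.mul_apply, ContinuousLinearMap.one_apply,
      ContinuousLinearEquiv.coe_coe, hAe]
    exact e.symm_apply_apply x
  refine ⟨e.symm.toContinuousLinearMap, ?_, ?_, ?_, ?_⟩
  · have : Ring.inverse ((⟨A, e.symm.toContinuousLinearMap, hmul1, hmul2⟩ :
        (H₁ →L[ℝ] H₁)ˣ) : H₁ →L[ℝ] H₁) = e.symm.toContinuousLinearMap :=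
      Ring.inverse_unit _
    exact this
  · intro x; rw [hAe]; exact e.symm_apply_apply x
  · intro x
    conv_lhs => rw [hAe]
    exact e.apply_symm_apply x
  · intro x
    show ‖e.symm x‖ ≤ α⁻¹ * ‖x‖
    have h1 : α * ‖e.symm x‖ * ‖e.symm x‖ ≤ ⟪A (e.symm x), e.symm x⟫_ℝ := tik_coercive R hα _
    have h2 : A (e.symm x) = x := by rw [hAe]; exact e.apply_symm_apply x
    rw [h2] at h1
    have h3 : ⟪x, e.symm x⟫_ℝ ≤ ‖x‖ * ‖e.symm x‖ := real_inner_le_norm _ _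
    rcases eq_or_lt_of_le (norm_nonneg (e.symm x)) with h | h
    · rw [← h]; positivity
    · rw [inv_mul_eq_div, le_div_iff₀ hα]
      calc ‖e.symm x‖ * α = α * ‖e.symm x‖ := by ring
        _ ≤ ‖x‖ := by nlinarith

lemma tik_dense_range (R : H₁ →L[ℝ] H₂) (hR : Function.Injective R) (ψt : H₁) {ε : ℝ}
    (hε : 0 < ε) : ∃ w : H₁, ‖ψt - ((ContinuousLinearMap.adjoint R).comp R) w‖ < ε := by
  set T : H₁ →L[ℝ] H₁ := (ContinuousLinearMap.adjoint R).comp R with hT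
  set K : Submodule ℝ H₁ := LinearMap.range (T : H₁ →ₗ[ℝ] H₁) with hK
  have horth : Kᗮ = ⊥ := by
    rw [Submodule.eq_bot_iff]
    intro w hw
    have h1 : ⟪T w, w⟫_ℝ = 0 := hw (T w) ⟨w, rfl⟩
    rw [tik_inner] at h1
    have h2 : R w = 0 := by
      rw [← norm_eq_zero]; nlinarith [norm_nonneg (R w)]
    apply hR
    rw [h2, map_zero]
  have htop : K.topologicalClosure = ⊤ := Submodule.topologicalClosure_eq_top_iff.mpr horth
  have hmem : ψt ∈ closure (K : Set H₁) := by
    have : ψt ∈ K.topologicalClosure := htop ▸ Submodule.mem_top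
    exact this
  rw [Metric.mem_closure_iff] at hmem
  obtain ⟨z, hz, hdist⟩ := hmem ε hε
  obtain ⟨w, rfl⟩ := hz
  exact ⟨w, by rwa [← dist_eq_norm]⟩

end TikhonovAux

/-- If `R` is injective and `y = R ψ̃` lies in the range of `R`, then the Tikhonov
regularized solutions `ψ_α = (α I + R* R)⁻¹ R* y` converge in norm to `ψ̃` as `α → 0⁺`. -/
theorem tikhonov_tendsto_solution
    {H₁ H₂ : Type*} [NormedAddCommGroup H₁] [InnerProductSpace ℝ H₁] [CompleteSpace H₁]
    [NormedAddCommGroup H₂] [InnerProductSpace ℝ H₂] [CompleteSpace H₂]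
    (R : H₁ →L[ℝ] H₂) (hR : Function.Injective R) (y : H₂) (ψt : H₁) (hψt : R ψt = y) :
    Tendsto (fun α : ℝ => tikhonov R α y) (𝓝[>] 0) (𝓝 ψt) := by
  set T : H₁ →L[ℝ] H₁ := (ContinuousLinearMap.adjoint R).comp R with hT
  rw [Metric.tendsto_nhdsWithin_nhds]
  intro ε hε
  obtain ⟨w, hw⟩ := tik_dense_range R hR ψt (show (0:ℝ) < ε/4 by linarith)
  refine ⟨ε / (4 * (‖w‖ + 1)), by positivity, ?_⟩
  intro α hα hαδ
  have hα' : 0 < α := hα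
  rw [Real.dist_eq, sub_zero, abs_of_pos hα'] at hαδ
  obtain ⟨S, hSinv, hS1, hS2, hSb⟩ := tik_exists_inverse R hα'
  set A : H₁ →L[ℝ] H₁ := α • (1 : H₁ →L[ℝ] H₁) + T with hA
  have hTψ : T ψt = A ψt - α • ψt := by
    simp [hA, ContinuousLinearMap.add_apply, ContinuousLinearMap.smul_apply]
  have hRy : (ContinuousLinearMap.adjoint R) y = T ψt := by rw [← hψt]; rfl
  have hval : tikhonov R α y = ψt - α • S ψt := by
    rw [tikhonov, hSinv, hRy, hTψ, map_sub, map_smul, hS1]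
  have hSTw : S (T w) = w - α • S w := by
    have : T w = A w - α • w := by
      simp [hA, ContinuousLinearMap.add_apply, ContinuousLinearMap.smul_apply]
    rw [this, map_sub, map_smul, hS1]
  have hb1 : ‖S (ψt - T w)‖ ≤ α⁻¹ * ‖ψt - T w‖ := hSb _
  have hb2 : ‖S (T w)‖ ≤ 2 * ‖w‖ := by
    rw [hSTw]
    calc ‖w - α • S w‖ ≤ ‖w‖ + ‖α • S w‖ := norm_sub_le _ _
      _ = ‖w‖ + α * ‖S w‖ := by rw [norm_smul, Real.norm_eq_abs, abs_of_pos hα']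
      _ ≤ ‖w‖ + α * (α⁻¹ * ‖w‖) := by
          have := hSb w
          nlinarith
      _ = 2 * ‖w‖ := by field_simp; ring
  have hsplit : S ψt = S (ψt - T w) + S (T w) := by rw [← map_add, sub_add_cancel]
  rw [dist_eq_norm, hval]
  have : ψt - α • S ψt - ψt = -(α • S ψt) := by abel
  rw [this, norm_neg, norm_smul, Real.norm_eq_abs, abs_of_pos hα']
  have key : α * ‖S ψt‖ ≤ ‖ψt - T w‖ + α * (2 * ‖w‖) := by
    calc α * ‖S ψt‖ ≤ α * (‖S (ψt - T w)‖ + ‖S (T w)‖) := by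
          rw [hsplit] at *
          have := norm_add_le (S (ψt - T w)) (S (T w))
          nlinarith [norm_nonneg (S (ψt - T w) + S (T w))]
      _ ≤ α * (α⁻¹ * ‖ψt - T w‖ + 2 * ‖w‖) := by nlinarith [norm_nonneg (ψt - T w)]
      _ = ‖ψt - T w‖ + α * (2 * ‖w‖) := by field_simp
  have hαw : α * (2 * ‖w‖) < ε / 2 := by
    have hw1 : 0 ≤ ‖w‖ := norm_nonneg w
    have : α * (2 * ‖w‖) ≤ (ε / (4 * (‖w‖ + 1))) * (2 * ‖w‖) := by nlinarith
    calc α * (2 * ‖w‖) ≤ (ε / (4 * (‖w‖ + 1))) * (2 * ‖w‖) := this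
      _ < ε / 2 := by
          rw [div_mul_eq_mul_div, div_lt_iff₀ (by positivity)]
          nlinarith
  linarith
end
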